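/- Let f : ℝ^d → ℝ^d be cooperative and homogeneous of degree p ≥ 1, let g : ℝ^d → ℝ^d be order-preserving on the nonnegative orthant and homogeneous of degree q ≥ p, and suppose there exists v ≻ 0 with f(v) + g(v) ≺ 0. Then for every λ ∈ (0, 1], f(λv) + g(λv) ⪯ λ^p (f(v) + g(v)) ≺ 0. -/
import Mathlib


/-- A square real matrix is Metzler if all off-diagonal entries are nonnegative. -/
def Matrix.IsMetzler {d : ℕ} (M : Matrix (Fin d) (Fin d) ℝ) : Prop :=
  ∀ i j, i ≠ j → 0 ≤ M i j

/-- A cooperative vector field: continuous, `C¹` away from the origin, with Metzler Jacobian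
on the nonnegative orthant minus the origin. -/
def IsCooperative {d : ℕ} (f : (Fin d → ℝ) → (Fin d → ℝ)) : Prop :=
  Continuous f ∧ ContDiffOn ℝ 1 f {(0 : Fin d → ℝ)}ᶜ ∧
    ∀ x : Fin d → ℝ, 0 ≤ x → x ≠ 0 →
      Matrix.IsMetzler (fun i j => fderiv ℝ f x (Pi.single j 1) i)

/-- A vector field is homogeneous of degree `p` if `f (λ • x) = λ^p • f x` for all `λ > 0`. -/
def IsHomogeneous {d : ℕ} (p : ℝ) (f : (Fin d → ℝ) → (Fin d → ℝ)) : Prop :=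
  ∀ l : ℝ, 0 < l → ∀ x, f (l • x) = l ^ p • f x

/-- `g` is order-preserving on the nonnegative orthant. -/
def OrderPreservingOnNonneg {d : ℕ} (g : (Fin d → ℝ) → (Fin d → ℝ)) : Prop :=
  ∀ u v : Fin d → ℝ, 0 ≤ v → v ≤ u → g v ≤ g u

theorem scaled_equilibrium_inequality {d : ℕ}
    (f g : (Fin d → ℝ) → (Fin d → ℝ)) (p q : ℝ) (hp : 1 ≤ p) (hq : p ≤ q)
    (hf : IsCooperative f) (hfhom : IsHomogeneous p f)
    (hg : OrderPreservingOnNonneg g) (hghom : IsHomogeneous q g)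
    (v : Fin d → ℝ) (hv : ∀ i, 0 < v i) (hS : ∀ i, f v i + g v i < 0) :
    ∀ l : ℝ, l ∈ Set.Ioc (0:ℝ) 1 →
      (∀ i, f (l • v) i + g (l • v) i ≤ l ^ p * (f v i + g v i)) ∧
      (∀ i, l ^ p * (f v i + g v i) < 0) := by
  -- g 0 = 0
  have hg0 : g 0 = 0 := by
    have h2 := hghom 2 (by norm_num) 0
    rw [smul_zero] at h2
    have hq0 : (0:ℝ) < q := lt_of_lt_of_le (by linarith) hq
    have h2q : (1:ℝ) < (2:ℝ) ^ q := Real.one_lt_rpow_iff_of_pos (by norm_num) |>.2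
      (Or.inl ⟨by norm_num, hq0⟩)
    funext i
    have := congrFun h2 i
    simp only [Pi.smul_apply, smul_eq_mul, Pi.zero_apply] at this ⊢
    nlinarith [this]
  have hgv : ∀ i, 0 ≤ g v i := by
    intro i
    have := hg v 0 le_rfl (fun i => (hv i).le) i
    simpa [hg0] using this
  intro l hl
  obtain ⟨hl0, hl1⟩ := hl
  have hlp : (0:ℝ) < l ^ p := Real.rpow_pos_of_pos hl0 p
  have hle : l ^ q ≤ l ^ p := Real.rpow_le_rpow_of_exponent_ge hl0 hl1 hq
  constructor
  · intro i
    have hfl := congrFun (hfhom l hl0 v) i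
    have hgl := congrFun (hghom l hl0 v) i
    simp only [Pi.smul_apply, smul_eq_mul] at hfl hgl
    rw [hfl, hgl]
    have : l ^ q * g v i ≤ l ^ p * g v i := mul_le_mul_of_nonneg_right hle (hgv i)
    linarith
  · intro i
    exact mul_neg_of_pos_of_neg hlp (hS i)
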